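/- arXiv:2008.09427 — 8 statements merged into one kernel-verified Lean document; each statement's English description precedes it below -/
import Mathlib

section
/- Let S be a type, let x : ℝ → S be a trajectory, let N be a positive natural number, let C : Fin N → S → Prop be a family of conditions ordered by priority, and let T > 0. Assume: (i) (invariance of achieved prefixes) for every index i and all times t ≤ t', if C j (x t) holds for all j ≤ i, then C j (x t') holds for all j ≤ i; and (ii) (finite-time achievement) for every index i and every time t ≥ 0, if C j (x t) holds for all j < i but C i (x t) fails, then there exists t' with t ≤ t' ≤ t + T such that C j (x t') holds for all j ≤ i. Then for every time t ≥ N·T, all conditions C i (x t), i = 0, …, N−1, hold simultaneously. -/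
/-- Lemma 1 of the paper: convergence of a Concurrent Goals Behavior Tree.
If every achieved prefix of prioritized conditions is invariant, and any
unsatisfied least-priority condition is achieved (together with the prefix)
within time `T`, then all `N` conditions hold from time `N * T` onwards. -/
theorem cgbt_convergence {S : Type*} (x : ℝ → S) (N : ℕ) (hN : 0 < N)
    (C : Fin N → S → Prop) (T : ℝ) (hT : 0 < T)
    (hinv : ∀ (i : Fin N) (t t' : ℝ), t ≤ t' →
      (∀ j, j ≤ i → C j (x t)) → (∀ j, j ≤ i → C j (x t')))
    (hach : ∀ (i : Fin N) (t : ℝ), 0 ≤ t →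
      (∀ j, j < i → C j (x t)) → ¬ C i (x t) →
      ∃ t', t ≤ t' ∧ t' ≤ t + T ∧ ∀ j, j ≤ i → C j (x t')) :
    ∀ t : ℝ, (N : ℝ) * T ≤ t → ∀ i : Fin N, C i (x t) := by
  suffices h : ∀ k : ℕ, k ≤ N → ∀ t : ℝ, (k : ℝ) * T ≤ t → ∀ j : Fin N, j.val < k → C j (x t) by
    intro t ht i
    exact h N le_rfl t ht i i.isLt
  intro k
  induction k with
  | zero => intro _ _ _ j hj; omega
  | succ k ih =>
    intro hk t ht j hj
    have hkN := Nat.lt_of_succ_le hk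
    set i : Fin N := ⟨k, hkN⟩ with hi
    have hs0 : (0:ℝ) ≤ (k:ℝ) * T := by positivity
    have hst : (k:ℝ) * T ≤ t - T := by push_cast at ht ⊢; linarith
    have hpre : ∀ j' : Fin N, j' < i → C j' (x (t - T)) := fun j' hj' =>
      ih (le_of_lt hkN) (t - T) hst j' hj'
    have hji : j ≤ i := by
      have : j.val ≤ k := Nat.lt_succ_iff.mp hj
      exact this
    by_cases hci : C i (x (t - T))
    · have hall : ∀ j', j' ≤ i → C j' (x (t - T)) := by
        intro j' hj'
        rcases lt_or_eq_of_le hj' with h | h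
        · exact hpre j' h
        · exact h ▸ hci
      exact hinv i (t - T) t (by linarith) hall j hji
    · obtain ⟨t', h1, h2, h3⟩ := hach i (t - T) (le_trans hs0 hst) hpre hci
      exact hinv i t' t (by linarith) h3 j hji
end

section
/- Let S be a type, let x : ℝ → S be a trajectory, let N be a positive natural number, let C : Fin N → S → Prop, and let T > 0. Assume hypotheses (i) and (ii) as follows: (i) for every index i and all times t ≤ t', if C j (x t) holds for all j ≤ i then C j (x t') holds for all j ≤ i; (ii) for every index i and every time t ≥ 0, if C j (x t) holds for all j < i but C i (x t) fails, then there exists t' with t ≤ t' ≤ t + T such that C j (x t') holds for all j ≤ i. Then (induction step): for every index i and time t ≥ 0, if C j (x t) holds for all j < i, then for every time s ≥ t + T, C j (x s) holds for all j ≤ i. -/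
/-- Induction step in the proof of Lemma 1 of the paper: if the first `i`
prioritized conditions (those of index `< i`) hold at time `t ≥ 0`, then at
every time `s ≥ t + T` all conditions of index `≤ i` hold. -/
theorem cgbt_induction_step {S : Type*} (x : ℝ → S) (N : ℕ) (hN : 0 < N)
    (C : Fin N → S → Prop) (T : ℝ) (hT : 0 < T)
    (hinv : ∀ (i : Fin N) (t t' : ℝ), t ≤ t' →
      (∀ j, j ≤ i → C j (x t)) → (∀ j, j ≤ i → C j (x t')))
    (hach : ∀ (i : Fin N) (t : ℝ), 0 ≤ t →
      (∀ j, j < i → C j (x t)) → ¬ C i (x t) →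
      ∃ t', t ≤ t' ∧ t' ≤ t + T ∧ ∀ j, j ≤ i → C j (x t')) :
    ∀ (i : Fin N) (t : ℝ), 0 ≤ t → (∀ j, j < i → C j (x t)) →
      ∀ s : ℝ, t + T ≤ s → ∀ j, j ≤ i → C j (x s) := by
  intro i t ht hlt s hs
  by_cases hCi : C i (x t)
  · refine hinv i t s (by linarith) (fun j hj => ?_)
    rcases lt_or_eq_of_le hj with h | h
    · exact hlt j h
    · exact h ▸ hCi
  · obtain ⟨t', ht1, ht2, hall⟩ := hach i t ht hlt hCi
    exact hinv i t' s (by linarith) hall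
end

section
/- Let N be a positive natural number, let h : Fin N → ℝ → ℝ be a family of differentiable functions (the barrier functions evaluated along the closed-loop trajectory), let ε > 0, and let α : ℝ → ℝ be a strictly monotone increasing function with α 0 = 0 that is locally Lipschitz. Assume that for every time t ≥ 0: (a) if there exists an index with h i t < 0, then, letting i be the least such index, deriv (h i) t ≥ ε and deriv (h j) t ≥ −α (h j t) for every j < i; and (b) if h j t ≥ 0 for all j, then deriv (h j) t ≥ −α (h j t) for every j. Then there exists a finite time T ≥ 0 such that for all t ≥ T and all indices j, h j t ≥ 0; that is, all constraints are satisfied in finite time and remain satisfied. -/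
/-- Growth lemma: if the derivative of a differentiable function is at least `ε`
on the open interval `(a, b)`, then `f b ≥ f a + ε * (b - a)`. -/
lemma cbfbt_grow {f : ℝ → ℝ} (hf : Differentiable ℝ f) {ε a b : ℝ} (hab : a ≤ b)
    (hd : ∀ x ∈ Set.Ioo a b, ε ≤ deriv f x) :
    ε * (b - a) ≤ f b - f a := by
  have h1 : ∀ x ∈ interior (Set.Icc a b), ε ≤ deriv f x := by
    rw [interior_Icc]; exact hd
  exact (convex_Icc a b).mul_sub_le_image_sub_of_le_deriv
    hf.continuous.continuousOn hf.differentiableOn h1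
    a (Set.left_mem_Icc.2 hab) b (Set.right_mem_Icc.2 hab) hab

/-- Lemma 2 of the paper: finite-time constraint satisfaction of a CBF-BT,
stated along the closed-loop trajectory.  If whenever some barrier is
negative the least-index violated barrier increases with rate at least `ε`
while all higher-priority (smaller-index) barriers satisfy the class-K
invariance inequality, and when all barriers are nonnegative they all
satisfy the invariance inequality, then after some finite time all barriers
are nonnegative forever. -/
theorem cbfbt_finite_time (N : ℕ) (hN : 0 < N) (h : Fin N → ℝ → ℝ)
    (hdiff : ∀ i, Differentiable ℝ (h i))
    (ε : ℝ) (hε : 0 < ε)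
    (α : ℝ → ℝ) (hα : StrictMono α) (hα0 : α 0 = 0)
    (hαlip : LocallyLipschitz α)
    (hviol : ∀ t : ℝ, 0 ≤ t → ∀ i : Fin N, h i t < 0 →
      (∀ j, j < i → 0 ≤ h j t) →
      ε ≤ deriv (h i) t ∧ ∀ j, j < i → -α (h j t) ≤ deriv (h j) t)
    (hsat : ∀ t : ℝ, 0 ≤ t → (∀ j : Fin N, 0 ≤ h j t) →
      ∀ j : Fin N, -α (h j t) ≤ deriv (h j) t) :
    ∃ T : ℝ, 0 ≤ T ∧ ∀ t : ℝ, T ≤ t → ∀ j : Fin N, 0 ≤ h j t := by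
  suffices H : ∀ k : ℕ, k ≤ N → ∃ T : ℝ, 0 ≤ T ∧
      ∀ t : ℝ, T ≤ t → ∀ j : Fin N, (j : ℕ) < k → 0 ≤ h j t by
    obtain ⟨T, hT0, hT⟩ := H N le_rfl
    exact ⟨T, hT0, fun t ht j => hT t ht j j.isLt⟩
  intro k
  induction k with
  | zero =>
    intro _
    exact ⟨0, le_refl 0, fun t _ j hj => absurd hj (Nat.not_lt_zero _)⟩
  | succ k ih =>
    intro hk1
    have hkN : k < N := hk1
    obtain ⟨T, hT0, hT⟩ := ih (le_of_lt hkN)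
    set i : Fin N := ⟨k, hkN⟩ with hi
    -- key derivative bound: whenever `h i` is negative after time `T`, it grows at rate `ε`
    have key : ∀ t : ℝ, T ≤ t → h i t < 0 → ε ≤ deriv (h i) t := by
      intro t ht hlt
      refine (hviol t (le_trans hT0 ht) i hlt ?_).1
      intro j hj
      exact hT t ht j (by simpa [Fin.lt_def, hi] using hj)
    -- Claim 1: there is a time `t1 ≥ T` where `h i t1 ≥ 0`
    have claim1 : ∃ t1 : ℝ, T ≤ t1 ∧ 0 ≤ h i t1 := by
      by_contra hcon
      push_neg at hcon
      have hneg : ∀ t : ℝ, T ≤ t → h i t < 0 := hcon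
      set b : ℝ := T + (1 - h i T) / ε with hb
      have hTb : T ≤ b := by
        have : 0 ≤ (1 - h i T) / ε := by
          apply div_nonneg _ (le_of_lt hε)
          have := hneg T le_rfl; linarith
        rw [hb]; linarith
      have hgrow := cbfbt_grow (hdiff i) hTb (fun x hx => key x (le_of_lt hx.1) (hneg x (le_of_lt hx.1)))
      have hbT : ε * (b - T) = 1 - h i T := by
        rw [hb]; field_simp; ring
      have : 0 ≤ h i b := by nlinarith [hneg T le_rfl]
      exact absurd this (not_le.2 (hneg b hTb))
    obtain ⟨t1, ht1T, ht1⟩ := claim1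
    -- Claim 2: `h i` stays nonnegative after `t1`
    have claim2 : ∀ t : ℝ, t1 ≤ t → 0 ≤ h i t := by
      intro s hs
      by_contra hcon
      push_neg at hcon
      set A : Set ℝ := Set.Icc t1 s ∩ {x | 0 ≤ h i x} with hA
      have hA_closed : IsClosed A :=
        isClosed_Icc.inter (isClosed_le continuous_const (hdiff i).continuous)
      have ht1A : t1 ∈ A := ⟨⟨le_refl t1, hs⟩, ht1⟩
      have hA_bdd : BddAbove A := ⟨s, fun x hx => hx.1.2⟩
      set u : ℝ := sSup A with hu
      have huA : u ∈ A := hA_closed.csSup_mem ⟨t1, ht1A⟩ hA_bdd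
      have hus : u ≤ s := huA.1.2
      have hu0 : 0 ≤ h i u := huA.2
      have ht1u : t1 ≤ u := huA.1.1
      have hmid : ∀ x ∈ Set.Ioo u s, h i x < 0 := by
        intro x hx
        by_contra hx0
        push_neg at hx0
        have : x ∈ A := ⟨⟨le_trans ht1u (le_of_lt hx.1), le_of_lt hx.2⟩, hx0⟩
        exact absurd (le_csSup hA_bdd this) (not_le.2 hx.1)
      have hgrow := cbfbt_grow (hdiff i) hus
        (fun x hx => key x (le_trans (le_trans ht1T ht1u) (le_of_lt hx.1)) (hmid x hx))
      nlinarith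
    refine ⟨t1, le_trans hT0 ht1T, fun t ht j hj => ?_⟩
    rcases Nat.lt_succ_iff_lt_or_eq.1 hj with hj' | hj'
    · exact hT t (le_trans ht1T ht) j hj'
    · have : j = i := Fin.ext hj'
      rw [this]
      exact claim2 t ht
end

section
/- Let α : ℝ → ℝ be a strictly monotone increasing, locally Lipschitz function with α 0 = 0, and let h : ℝ → ℝ be differentiable with h 0 ≥ 0 and deriv h t ≥ −α (h t) for all t ≥ 0. Then h t ≥ 0 for all t ≥ 0. -/
/-- Scalar comparison form of the CBF invariance theorem (Theorem 2 of
Ames et al., eq. (1) of the paper): if `h 0 ≥ 0` and `ḣ ≥ -α (h)` for a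
class-K function `α`, then `h` stays nonnegative for all `t ≥ 0`. -/
theorem cbf_scalar_invariance (α : ℝ → ℝ) (hα : StrictMono α) (hα0 : α 0 = 0)
    (hαlip : LocallyLipschitz α)
    (h : ℝ → ℝ) (hdiff : Differentiable ℝ h) (h0 : 0 ≤ h 0)
    (hineq : ∀ t : ℝ, 0 ≤ t → -α (h t) ≤ deriv h t) :
    ∀ t : ℝ, 0 ≤ t → 0 ≤ h t := by
  intro t₁ ht₁
  by_contra hneg
  push_neg at hneg
  -- The set of times in [0, t₁] where h is nonnegative
  set S : Set ℝ := Set.Icc 0 t₁ ∩ {t | 0 ≤ h t} with hS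
  have hScompact : IsCompact S :=
    (isCompact_Icc).inter_right (isClosed_le continuous_const hdiff.continuous)
  have hSne : S.Nonempty := ⟨0, ⟨le_refl 0, ht₁⟩, h0⟩
  set s := sSup S with hs
  have hsmem : s ∈ S := hScompact.sSup_mem hSne
  have hs0 : 0 ≤ s := hsmem.1.1
  have hst₁ : s ≤ t₁ := hsmem.1.2
  have hhs : 0 ≤ h s := hsmem.2
  have hslt : s < t₁ := lt_of_le_of_ne hst₁ (by
    intro heq
    rw [heq] at hhs
    exact absurd hhs (not_le.mpr hneg))
  -- On (s, t₁], h is negative, hence deriv h ≥ 0 there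
  have hderiv : ∀ x ∈ Set.Ioo s t₁, 0 ≤ deriv h x := by
    intro x hx
    obtain ⟨hxs, hxt⟩ := hx
    have hx0 : 0 ≤ x := le_of_lt (lt_of_le_of_lt hs0 hxs)
    have hxneg : h x < 0 := by
      by_contra hc
      push_neg at hc
      have : x ∈ S := ⟨⟨hx0, le_of_lt hxt⟩, hc⟩
      exact absurd (le_csSup hScompact.bddAbove this) (not_le.mpr hxs)
    have : α (h x) ≤ 0 := by
      have := hα.monotone (le_of_lt hxneg)
      rwa [hα0] at this
    linarith [hineq x hx0]
  have hmono : MonotoneOn h (Set.Icc s t₁) := by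
    apply monotoneOn_of_deriv_nonneg (convex_Icc s t₁) hdiff.continuous.continuousOn
      (hdiff.differentiableOn.mono interior_subset)
    intro x hx
    rw [interior_Icc] at hx
    exact hderiv x hx
  have := hmono ⟨le_refl s, hst₁⟩ ⟨le_of_lt hslt, le_refl t₁⟩ hst₁
  linarith
end

section
/- Let h : ℝ → ℝ be differentiable and let ε > 0. Assume that for every t ≥ 0 with h t < 0 one has deriv h t ≥ ε. Then: (1) for every t ≥ max 0 (−(h 0)/ε), h t ≥ 0; and (2) the set {t ≥ 0 : h t ≥ 0} is upward closed, i.e., if h t₀ ≥ 0 and t ≥ t₀ ≥ 0 then h t ≥ 0. -/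
/-!
While `h` is negative it climbs at rate at least `ε`, so starting from `h 0` it cannot stay
negative beyond time `-(h 0) / ε`. Once nonnegative it stays so: `h` can never get below any
level `-δ < 0`, because at a first time it touched `-δ` it would have to be decreasing,
contradicting the positive derivative there (Mathlib's fencing theorem).
-/

open Set

theorem nonneg_of_deriv_pos_of_neg {f f' : ℝ → ℝ} {a b : ℝ} (hf : ContinuousOn f (Icc a b))
    (hf' : ∀ x ∈ Ico a b, HasDerivWithinAt f (f' x) (Ici x) x)
    (hpos : ∀ x ∈ Ico a b, f x < 0 → 0 < f' x) (ha : 0 ≤ f a) {x : ℝ} (hx : x ∈ Icc a b) :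
    0 ≤ f x := by
  refine le_of_forall_pos_le_add fun δ hδ => ?_
  have hfence : -f x ≤ δ :=
    image_le_of_deriv_right_lt_deriv_boundary (B := fun _ => δ) (B' := 0) hf.neg
      (fun y hy => (hf' y hy).neg) (by simp only [Pi.neg_apply]; linarith)
      (fun _ => hasDerivAt_const _ _)
      (fun y hy hyδ => neg_neg_of_pos (hpos y hy (by simp only [Pi.neg_apply] at hyδ; linarith)))
      hx
  linarith

theorem nonneg_of_le_deriv_of_neg_le_mul {f : ℝ → ℝ} {a b ε : ℝ} (hf : Differentiable ℝ f)
    (hε : 0 < ε) (hderiv : ∀ x ∈ Icc a b, f x < 0 → ε ≤ deriv f x) (hab : a ≤ b)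
    (hreach : -f a ≤ ε * (b - a)) : 0 ≤ f b := by
  by_contra! hb
  have hneg : ∀ x ∈ Icc a b, f x < 0 := fun x hx => by
    by_contra! hx0
    exact hb.not_ge <| nonneg_of_deriv_pos_of_neg hf.continuous.continuousOn
      (fun y _ => (hf y).hasDerivAt.hasDerivWithinAt)
      (fun y hy hy0 => hε.trans_le (hderiv y ⟨hx.1.trans hy.1, hy.2.le⟩ hy0)) hx0 ⟨hx.2, le_rfl⟩
  have hgrowth : ε * (b - a) ≤ f b - f a :=
    (convex_Icc a b).mul_sub_le_image_sub_of_le_deriv hf.continuous.continuousOn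
      hf.differentiableOn
      (fun x hx => hderiv x (interior_subset hx) (hneg x (interior_subset hx)))
      a ⟨le_rfl, hab⟩ b ⟨hab, le_rfl⟩ hab
  linarith

/-- Finite-time achievement estimate underlying condition (9) of Lemma 2 of
the paper: if `h` increases with rate at least `ε > 0` whenever it is
negative (for nonnegative times), then `h` is nonnegative from time
`max 0 (-(h 0)/ε)` onwards, and the set of nonnegative times at which
`h ≥ 0` is upward closed. -/
theorem cbf_finite_time_achievement (h : ℝ → ℝ) (hdiff : Differentiable ℝ h)
    (ε : ℝ) (hε : 0 < ε)
    (hineq : ∀ t : ℝ, 0 ≤ t → h t < 0 → ε ≤ deriv h t) :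
    (∀ t : ℝ, max 0 (-(h 0) / ε) ≤ t → 0 ≤ h t) ∧
      (∀ t₀ t : ℝ, 0 ≤ t₀ → t₀ ≤ t → 0 ≤ h t₀ → 0 ≤ h t) := by
  refine ⟨fun t ht => ?_, fun t₀ t ht₀ hle h0 => ?_⟩
  · rw [max_le_iff, div_le_iff₀ hε] at ht
    exact nonneg_of_le_deriv_of_neg_le_mul hdiff hε (fun x hx => hineq x hx.1) ht.1
      (by linarith)
  · exact nonneg_of_deriv_pos_of_neg hdiff.continuous.continuousOn
      (fun x _ => (hdiff x).hasDerivAt.hasDerivWithinAt)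
      (fun x hx hx0 => hε.trans_le (hineq x (ht₀.trans hx.1) hx0)) h0 ⟨hle, le_rfl⟩
end

section
/- Let E be a finite-dimensional real inner product space, let x : ℝ → E be differentiable, let h : E → ℝ be continuously differentiable, and let α : ℝ → ℝ be strictly monotone increasing, locally Lipschitz with α 0 = 0. Assume h (x 0) ≥ 0 and that for every t ≥ 0, the derivative of h at x t applied to the velocity x' t satisfies fderiv ℝ h (x t) (deriv x t) ≥ −α (h (x (t))). Then h (x t) ≥ 0 for all t ≥ 0; that is, the trajectory remains in the safe set C = {y : h y ≥ 0}. -/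
/-!
While `h (x t) < 0`, strict monotonicity of `α` makes `-α (h (x t))` positive, so by the chain rule
`h ∘ x` is strictly increasing there. Hence after the last time in `[0, t]` at which `h ∘ x` is
nonnegative it can only increase, and it cannot be negative at `t`.
-/

open Set

theorem nonneg_of_deriv_pos_of_neg_s5 {g : ℝ → ℝ} {a : ℝ} (hg : ContinuousOn g (Ici a))
    (hg' : ∀ t, a < t → g t < 0 → 0 < deriv g t) (ha : 0 ≤ g a) :
    ∀ t, a ≤ t → 0 ≤ g t := by
  intro b hab
  by_contra! hb
  have hclosed : IsClosed (Icc a b ∩ g ⁻¹' Ici 0) :=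
    (hg.mono Icc_subset_Ici_self).preimage_isClosed_of_isClosed isClosed_Icc isClosed_Ici
  obtain ⟨s, ⟨⟨has, hsb⟩, hgs⟩, hlast⟩ :=
    (isCompact_Icc.of_isClosed_subset hclosed inter_subset_left).exists_isGreatest
      ⟨a, ⟨left_mem_Icc.2 hab, ha⟩⟩
  have hneg : ∀ t ∈ Ioo s b, g t < 0 := fun t ⟨hst, htb⟩ => by
    by_contra! hgt
    exact hst.not_ge (hlast ⟨⟨has.trans hst.le, htb.le⟩, hgt⟩)
  have hsb' : s < b := hsb.lt_of_ne fun hs => hb.not_ge (hs ▸ hgs)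
  have hmono : StrictMonoOn g (Icc s b) := by
    refine strictMonoOn_of_deriv_pos (convex_Icc s b) (hg.mono fun t ht => has.trans ht.1) ?_
    intro t ht
    rw [interior_Icc] at ht
    exact hg' t (has.trans_lt ht.1) (hneg t ht)
  linarith [hmono (left_mem_Icc.2 hsb) (right_mem_Icc.2 hsb) hsb', show 0 ≤ g s from hgs]

theorem cbf_forward_invariance_general
    {E : Type*} [NormedAddCommGroup E] [InnerProductSpace ℝ E]
    (x : ℝ → E) (hx : Differentiable ℝ x)
    (h : E → ℝ) (hh : ContDiff ℝ 1 h)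
    (α : ℝ → ℝ) (hα : StrictMono α) (hα0 : α 0 = 0)
    (h0 : 0 ≤ h (x 0))
    (hineq : ∀ t : ℝ, 0 ≤ t → -α (h (x t)) ≤ fderiv ℝ h (x t) (deriv x t)) :
    ∀ t : ℝ, 0 ≤ t → 0 ≤ h (x t) := by
  have hhd : Differentiable ℝ h := hh.differentiable one_ne_zero
  have hcomp : Differentiable ℝ (h ∘ x) := hhd.comp hx
  refine nonneg_of_deriv_pos_of_neg_s5 hcomp.continuous.continuousOn (fun t ht hneg => ?_) h0
  have hαneg : α (h (x t)) < 0 := hα0 ▸ hα hneg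
  have hchain : deriv (fun s => h (x s)) t = fderiv ℝ h (x t) (deriv x t) :=
    fderiv_comp_deriv t (hhd _) (hx t)
  linarith [hineq t ht.le]

/-- Forward invariance of the safe set `C = {y : h y ≥ 0}` along a
trajectory (eq. (1) of the paper): if `h (x 0) ≥ 0` and the chain-rule
derivative `dh(x t)[ẋ t]` satisfies the CBF inequality with a class-K
function `α` at all nonnegative times, then the trajectory stays in `C`. -/
theorem cbf_forward_invariance
    {E : Type*} [NormedAddCommGroup E] [InnerProductSpace ℝ E]
    [FiniteDimensional ℝ E]
    (x : ℝ → E) (hx : Differentiable ℝ x)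
    (h : E → ℝ) (hh : ContDiff ℝ 1 h)
    (α : ℝ → ℝ) (hα : StrictMono α) (hα0 : α 0 = 0)
    (hαlip : LocallyLipschitz α)
    (h0 : 0 ≤ h (x 0))
    (hineq : ∀ t : ℝ, 0 ≤ t → -α (h (x t)) ≤ fderiv ℝ h (x t) (deriv x t)) :
    ∀ t : ℝ, 0 ≤ t → 0 ≤ h (x t) :=
  cbf_forward_invariance_general x hx h hh α hα hα0 h0 hineq
end

section
/- Let N be a positive natural number, let h : Fin N → ℝ → ℝ be a family of differentiable functions, let ε > 0 and M > 0, and let α : ℝ → ℝ be strictly monotone increasing, locally Lipschitz with α 0 = 0. Assume that h j t ≥ −M for all indices j and all t ≥ 0, and that for every time t ≥ 0: (a) if there exists an index with h i t < 0, then, letting i be the least such index, deriv (h i) t ≥ ε and deriv (h j) t ≥ −α (h j t) for every j < i; and (b) if h j t ≥ 0 for all j, then deriv (h j) t ≥ −α (h j t) for every j. Then for every t ≥ N·M/ε and every index j, h j t ≥ 0. -/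
/-- If `f` is differentiable, bounded below by `-M` at `a`, and has derivative
at least `ε` whenever it is negative on `[a, a + M/ε]`, then it reaches `0`
within that interval. -/
lemma cbf_reach (f : ℝ → ℝ) (hf : Differentiable ℝ f) (ε M a : ℝ)
    (hε : 0 < ε) (hM : 0 < M) (hMa : -M ≤ f a)
    (hd : ∀ s, a ≤ s → s ≤ a + M / ε → f s < 0 → ε ≤ deriv f s) :
    ∃ s, a ≤ s ∧ s ≤ a + M / ε ∧ 0 ≤ f s := by
  by_contra hc
  push_neg at hc
  have hMε : 0 < M / ε := div_pos hM hε
  have hab : a < a + M / ε := by linarith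
  obtain ⟨c, hc1, hc2⟩ := exists_deriv_eq_slope f hab hf.continuous.continuousOn
    (fun x _ => (hf x).differentiableWithinAt)
  have hfc : f c < 0 := hc c hc1.1.le hc1.2.le
  have hεc : ε ≤ (f (a + M / ε) - f a) / (a + M / ε - a) :=
    hc2 ▸ hd c hc1.1.le hc1.2.le hfc
  have hba : a + M / ε - a = M / ε := by ring
  rw [hba, le_div_iff₀ hMε] at hεc
  have hεM : ε * (M / ε) = M := by field_simp
  have hfb : f (a + M / ε) < 0 := hc _ (by linarith) le_rfl
  nlinarith

/-- Once a differentiable function is nonnegative, if its derivative is at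
least `ε > 0` whenever it is negative, it stays nonnegative. -/
lemma cbf_persist (f : ℝ → ℝ) (hf : Differentiable ℝ f) (ε : ℝ) (hε : 0 < ε)
    (s0 t : ℝ) (hst : s0 ≤ t) (h0 : 0 ≤ f s0)
    (hd : ∀ s, s0 ≤ s → s ≤ t → f s < 0 → ε ≤ deriv f s) : 0 ≤ f t := by
  by_contra hneg
  push_neg at hneg
  have hSne : (Set.Icc s0 t ∩ f ⁻¹' Set.Ici 0).Nonempty := ⟨s0, ⟨le_rfl, hst⟩, h0⟩
  have hScomp : IsCompact (Set.Icc s0 t ∩ f ⁻¹' Set.Ici 0) :=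
    isCompact_Icc.inter_right (isClosed_Ici.preimage hf.continuous)
  obtain ⟨hmem1, hmem2⟩ := hScomp.sSup_mem hSne
  set s := sSup (Set.Icc s0 t ∩ f ⁻¹' Set.Ici 0) with hs
  have hs0s : s0 ≤ s := hmem1.1
  have hst' : s ≤ t := hmem1.2
  have hfs : (0:ℝ) ≤ f s := hmem2
  have hslt : s < t := by
    rcases eq_or_lt_of_le hst' with heq | hlt
    · exact absurd (heq ▸ hfs) (not_le.mpr hneg)
    · exact hlt
  have hnegafter : ∀ x ∈ Set.Ioc s t, f x < 0 := by
    intro x hx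
    by_contra hge
    push_neg at hge
    have hxS : x ∈ Set.Icc s0 t ∩ f ⁻¹' Set.Ici 0 := ⟨⟨hs0s.trans hx.1.le, hx.2⟩, hge⟩
    exact absurd (le_csSup hScomp.bddAbove hxS) (not_le.mpr hx.1)
  have hmono : StrictMonoOn f (Set.Icc s t) := by
    apply strictMonoOn_of_deriv_pos (convex_Icc s t) hf.continuous.continuousOn
    intro x hx
    rw [interior_Icc] at hx
    have hfx : f x < 0 := hnegafter x ⟨hx.1, hx.2.le⟩
    exact lt_of_lt_of_le hε (hd x (hs0s.trans hx.1.le) hx.2.le hfx)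
  have : f s < f t := hmono ⟨le_rfl, hst'⟩ ⟨hst', le_rfl⟩ hslt
  linarith

/-- Quantitative version of Lemma 2 of the paper (combined with the time
bound of Lemma 1): if each barrier value is bounded below by `-M`, the
least-index violated barrier increases with rate at least `ε` while all
higher-priority barriers satisfy the class-K invariance inequality, and all
barriers satisfy the invariance inequality once nonnegative, then all `N`
constraints are satisfied by time `N * M / ε`. -/
theorem cbfbt_quantitative (N : ℕ) (hN : 0 < N) (h : Fin N → ℝ → ℝ)
    (hdiff : ∀ i, Differentiable ℝ (h i))
    (ε M : ℝ) (hε : 0 < ε) (hM : 0 < M)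
    (α : ℝ → ℝ) (hα : StrictMono α) (hα0 : α 0 = 0)
    (hαlip : LocallyLipschitz α)
    (hbound : ∀ (j : Fin N) (t : ℝ), 0 ≤ t → -M ≤ h j t)
    (hviol : ∀ t : ℝ, 0 ≤ t → ∀ i : Fin N, h i t < 0 →
      (∀ j, j < i → 0 ≤ h j t) →
      ε ≤ deriv (h i) t ∧ ∀ j, j < i → -α (h j t) ≤ deriv (h j) t)
    (hsat : ∀ t : ℝ, 0 ≤ t → (∀ j : Fin N, 0 ≤ h j t) →
      ∀ j : Fin N, -α (h j t) ≤ deriv (h j) t) :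
    ∀ t : ℝ, (N : ℝ) * M / ε ≤ t → ∀ j : Fin N, 0 ≤ h j t := by
  have hMε : 0 < M / ε := div_pos hM hε
  have key : ∀ k : ℕ, ∀ t : ℝ, (k : ℝ) * M / ε ≤ t →
      ∀ j : Fin N, (j : ℕ) < k → 0 ≤ h j t := by
    intro k
    induction k with
    | zero => intro t _ j hj; omega
    | succ k ih =>
      intro t ht j hj
      have hk1 : ((k + 1 : ℕ) : ℝ) * M / ε = (k : ℝ) * M / ε + M / ε := by
        push_cast; ring
      rcases Nat.lt_or_ge (j : ℕ) k with hjk | hjk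
      · exact ih t (by rw [hk1] at ht; linarith) j hjk
      · have hjk' : (j : ℕ) = k := by omega
        set a : ℝ := (k : ℝ) * M / ε with ha
        have ha0 : 0 ≤ a := by positivity
        have hderiv : ∀ s, a ≤ s → h j s < 0 → ε ≤ deriv (h j) s := by
          intro s hs hneg
          refine (hviol s (ha0.trans hs) j hneg ?_).1
          intro j' hj'
          rw [Fin.lt_def] at hj'
          exact ih s hs j' (by omega)
        obtain ⟨s0, hs0a, hs0b, hs0⟩ := cbf_reach (h j) (hdiff j) ε M a hε hM
          (hbound j a ha0) (fun s hs _ => hderiv s hs)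
        have ht' : s0 ≤ t := by rw [hk1] at ht; linarith
        exact cbf_persist (h j) (hdiff j) ε hε s0 t ht' hs0
          (fun s hs _ hneg => hderiv s (hs0a.trans hs) hneg)
  intro t ht j
  exact key N t ht j j.isLt
end

section
/- Let x₁, x₂ : ℝ → EuclideanSpace ℝ (Fin 2) be differentiable trajectories of two agents, let m_s > 0 be the safety margin, and let α : ℝ → ℝ be strictly monotone increasing, locally Lipschitz with α 0 = 0. Define h t = ‖x₁ t − x₂ t‖ − m_s. Assume ‖x₁ 0 − x₂ 0‖ ≥ m_s, that x₁ t ≠ x₂ t for all t ≥ 0, and that for all t ≥ 0 the controls u_i = deriv x_i satisfy the CBF condition ⟪x₁ t − x₂ t, deriv x₁ t − deriv x₂ t⟫ / ‖x₁ t − x₂ t‖ ≥ −α (h t). Then ‖x₁ t − x₂ t‖ ≥ m_s for all t ≥ 0. -/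
open scoped RealInnerProductSpace

open Set

/-! The distance `d = ‖x₁ - x₂‖` never vanishes, so it is differentiable with derivative the
left-hand side of the CBF condition. While `d < m_s` the class-K function gives
`-α (d - m_s) > 0`, so `d` is nondecreasing there; starting from the last time `t₀ ≤ t` at which
`m_s ≤ d t₀`, it therefore cannot fall below `m_s` by time `t`. -/

theorem HasDerivAt.norm {E : Type*} [NormedAddCommGroup E] [InnerProductSpace ℝ E]
    {y : ℝ → E} {y' : E} {t : ℝ} (hy : HasDerivAt y y' t) (hyt : y t ≠ 0) :
    HasDerivAt (fun s => ‖y s‖) (⟪y t, y'⟫ / ‖y t‖) t := by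
  have hsqrt := hy.norm_sq.sqrt (pow_ne_zero 2 (norm_ne_zero_iff.mpr hyt))
  simp only [Real.sqrt_sq (norm_nonneg _)] at hsqrt
  convert hsqrt using 1
  ring

theorem le_image_of_hasDerivAt_nonneg_below {f f' : ℝ → ℝ} {a b c : ℝ} (hab : a ≤ b)
    (hf : ContinuousOn f (Icc a b)) (ha : c ≤ f a)
    (hf' : ∀ x ∈ Ioo a b, f x < c → HasDerivAt f (f' x) x)
    (hf'_nonneg : ∀ x ∈ Ioo a b, f x < c → 0 ≤ f' x) :
    c ≤ f b := by
  set S := Icc a b ∩ f ⁻¹' Ici c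
  have hS_bdd : BddAbove S := bddAbove_Icc.mono inter_subset_left
  set t₀ := sSup S
  have ht₀ : t₀ ∈ S :=
    (hf.preimage_isClosed_of_isClosed isClosed_Icc isClosed_Ici).csSup_mem
      ⟨a, ⟨left_mem_Icc.mpr hab, ha⟩⟩ hS_bdd
  obtain ⟨⟨hat₀, ht₀b⟩, hct₀⟩ := ht₀
  have hbelow : ∀ x ∈ Ioo t₀ b, x ∈ Ioo a b ∧ f x < c := fun x hx =>
    ⟨⟨hat₀.trans_lt hx.1, hx.2⟩,
      not_le.mp fun hcx => hx.1.not_ge (le_csSup hS_bdd ⟨⟨hat₀.trans hx.1.le, hx.2.le⟩, hcx⟩)⟩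
  have hmono : MonotoneOn f (Icc t₀ b) := by
    refine monotoneOn_of_hasDerivWithinAt_nonneg (f' := f') (convex_Icc _ _)
      (hf.mono (Icc_subset_Icc_left hat₀)) ?_ ?_ <;> rw [interior_Icc]
    · exact fun x hx => (hf' x (hbelow x hx).1 (hbelow x hx).2).hasDerivWithinAt
    · exact fun x hx => hf'_nonneg x (hbelow x hx).1 (hbelow x hx).2
  exact hct₀.trans (hmono (left_mem_Icc.mpr ht₀b) (right_mem_Icc.mpr ht₀b) ht₀b)

theorem collision_avoidance_cbf_general
    (x₁ x₂ : ℝ → EuclideanSpace ℝ (Fin 2))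
    (hx₁ : Differentiable ℝ x₁) (hx₂ : Differentiable ℝ x₂)
    (m_s : ℝ)
    (α : ℝ → ℝ) (hα : StrictMono α) (hα0 : α 0 = 0)
    (h0 : m_s ≤ ‖x₁ 0 - x₂ 0‖)
    (hne : ∀ t : ℝ, 0 ≤ t → x₁ t ≠ x₂ t)
    (hcbf : ∀ t : ℝ, 0 ≤ t →
      -α (‖x₁ t - x₂ t‖ - m_s) ≤
        ⟪x₁ t - x₂ t, deriv x₁ t - deriv x₂ t⟫ / ‖x₁ t - x₂ t‖) :
    ∀ t : ℝ, 0 ≤ t → m_s ≤ ‖x₁ t - x₂ t‖ := by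
  intro t ht
  have hdist : ∀ s, 0 ≤ s → HasDerivAt (fun s => ‖x₁ s - x₂ s‖)
      (⟪x₁ s - x₂ s, deriv x₁ s - deriv x₂ s⟫ / ‖x₁ s - x₂ s‖) s := fun s hs =>
    ((hx₁ s).hasDerivAt.sub (hx₂ s).hasDerivAt).norm (sub_ne_zero.mpr (hne s hs))
  refine le_image_of_hasDerivAt_nonneg_below ht
    (hx₁.continuous.sub hx₂.continuous).norm.continuousOn h0
    (fun s hs _ => hdist s hs.1.le) (fun s hs hlt => ?_)
  have hα_neg : α (‖x₁ s - x₂ s‖ - m_s) < 0 := hα0 ▸ hα (sub_neg.mpr hlt)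
  linarith [hcbf s hs.1.le]

/-- Forward invariance of the collision-free set for two agents
(`Safe from collisions` constraint of the paper's AUV mission): with barrier
function `h = ‖x₁ - x₂‖ - m_s`, enforcing the CBF inequality
`⟪x₁ - x₂, ẋ₁ - ẋ₂⟫ / ‖x₁ - x₂‖ ≥ -α (h)` for a class-K function `α`
keeps the inter-agent distance at least `m_s`. -/
theorem collision_avoidance_cbf
    (x₁ x₂ : ℝ → EuclideanSpace ℝ (Fin 2))
    (hx₁ : Differentiable ℝ x₁) (hx₂ : Differentiable ℝ x₂)
    (m_s : ℝ) (hms : 0 < m_s)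
    (α : ℝ → ℝ) (hα : StrictMono α) (hα0 : α 0 = 0)
    (hαlip : LocallyLipschitz α)
    (h0 : m_s ≤ ‖x₁ 0 - x₂ 0‖)
    (hne : ∀ t : ℝ, 0 ≤ t → x₁ t ≠ x₂ t)
    (hcbf : ∀ t : ℝ, 0 ≤ t →
      -α (‖x₁ t - x₂ t‖ - m_s) ≤
        ⟪x₁ t - x₂ t, deriv x₁ t - deriv x₂ t⟫ / ‖x₁ t - x₂ t‖) :
    ∀ t : ℝ, 0 ≤ t → m_s ≤ ‖x₁ t - x₂ t‖ :=
  collision_avoidance_cbf_general x₁ x₂ hx₁ hx₂ m_s α hα hα0 h0 hne hcbf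
end
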